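/- Let D_0 ++ D_0 ++ D_1 ++ D_2 ++ ⋯ be the infinite binary word (where D_0 = "1" and D_{n+1} = "0" ++ D_n ++ D_n), and let E_∞ be the infinite word that has each E_n (E_0 = "1", E_{n+1} = E_n ++ E_n ++ "0") as a prefix. Then these two infinite words are equal. -/
import Mathlib


/-- D_0 = "1", D_{n+1} = "0" ++ D_n ++ D_n. -/
def Dword : ℕ → List ℕ
  | 0 => [1]
  | n + 1 => 0 :: (Dword n ++ Dword n)

/-- E_0 = "1", E_{n+1} = E_n ++ E_n ++ "0". -/
def Eword : ℕ → List ℕ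
  | 0 => [1]
  | n + 1 => Eword n ++ Eword n ++ [0]

/-- The finite partial concatenations D_0 ++ D_0 ++ D_1 ++ ⋯ ++ D_{m-1} of the
    infinite word D_0 D_0 D_1 D_2 ⋯ . -/
def Dpartial (m : ℕ) : List ℕ := Dword 0 ++ ((List.range m).map Dword).flatten

lemma Dpartial_succ (m : ℕ) : Dpartial (m + 1) = Dpartial m ++ Dword m := by
  simp [Dpartial, List.range_succ]

lemma Dword_eq (n : ℕ) : Dword n = List.replicate n 0 ++ Dpartial n := by
  induction n with
  | zero => simp [Dword, Dpartial]
  | succ n ih =>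
    rw [Dword, Dpartial_succ, ih]
    simp [List.replicate_succ]

lemma Eword_eq (n : ℕ) : Eword n = Dpartial n ++ List.replicate n 0 := by
  induction n with
  | zero => simp [Eword, Dpartial, Dword]
  | succ n ih =>
    rw [Eword, ih, Dpartial_succ, Dword_eq, List.replicate_succ']
    simp

lemma Dpartial_mono : ∀ {m n : ℕ}, m ≤ n → Dpartial m <+: Dpartial n := by
  intro m n h
  induction n with
  | zero => simpa using (Nat.le_zero.mp h) ▸ List.prefix_refl _
  | succ n ih =>
    rcases Nat.lt_or_ge m (n + 1) with h' | h'
    · exact (ih (Nat.lt_succ_iff.mp h')).trans (Dpartial_succ n ▸ List.prefix_append _ _)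
    · exact le_antisymm h h' ▸ List.prefix_refl _

lemma Eword_mono : ∀ {m n : ℕ}, m ≤ n → Eword m <+: Eword n := by
  intro m n h
  induction n with
  | zero => simpa using (Nat.le_zero.mp h) ▸ List.prefix_refl _
  | succ n ih =>
    rcases Nat.lt_or_ge m (n + 1) with h' | h'
    · refine (ih (Nat.lt_succ_iff.mp h')).trans ?_
      rw [Eword]
      exact (List.prefix_append _ _).trans (List.prefix_append _ _)
    · exact le_antisymm h h' ▸ List.prefix_refl _

lemma Eword_prefix_Dpartial (n : ℕ) : Eword n <+: Dpartial (n + 1) := by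
  rw [Eword_eq, Dpartial_succ, Dword_eq]
  exact ⟨Dpartial n, by simp⟩

/-- The infinite word D_0 D_0 D_1 D_2 ⋯ equals the infinite word E_∞ having each
    E_n as a prefix: every finite prefix of one is comparable with every finite
    prefix of the other.  (Since the lengths of the `Dpartial m` and of the `Eword n`
    both tend to infinity, this expresses the equality of the two infinite words.) -/
theorem Dinfinite_eq_Einfinite :
    ∀ m n : ℕ, Dpartial m <+: Eword n ∨ Eword n <+: Dpartial m := by
  intro m n
  rcases le_or_gt m n with h | h
  · left
    exact (Dpartial_mono h).trans (Eword_eq n ▸ List.prefix_append _ _)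
  · right
    exact (Eword_prefix_Dpartial n).trans (Dpartial_mono h)
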